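/- Let X, Y be Hilbert spaces, A : X → Y a bounded linear operator, η > 0, and {g_θ}_{θ∈Θ} a family of functionals on X such that for all θ ∈ Θ: g_θ is convex, coercive and lower-semicontinuous; g_θ(x) ≥ 0 for all x; g_θ(0) ≤ M_g; and the uniform Hölder stability |g_θ(x) − g_{θ'}(x)| ≤ C_g ‖x‖_X² d(θ,θ')^{2α} holds for all x ∈ X, θ,θ' ∈ Θ, with α ∈ (0,1]. Then the Elastic-Net regularizer R_θ(y) = argmin_{x ∈ X} { (1/2)‖Ax − y‖_Y² + g_θ(x) + η‖x‖_X² } satisfies, for all y ∈ Y and θ, θ' ∈ Θ, ‖R_θ(y) − R_{θ'}(y)‖_X² ≤ (C_g/η) ( ‖R_θ(y)‖_X² + ‖R_{θ'}(y)‖_X² ) d(θ,θ')^{2α}; in particular, R_θ(y) is Hölder stable in θ with constant of the form (L_R ‖y‖_Y + L'_R) and exponent α. -/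

import Mathlib

/-!
The Elastic-Net data term `x ↦ ½‖Ax - y‖² + η‖x‖²` is `2η`-strongly convex. Testing the
minimality of `u = R_θ(y)` and of `v = R_{θ'}(y)` against their midpoint and adding the two
inequalities, strong convexity of the data term and convexity of the penalties leave
`η‖u - v‖² ≤ (g_θ v - g_{θ'} v) + (g_{θ'} u - g_θ u)`, which the Hölder stability of the
penalties bounds by `C_g (‖u‖² + ‖v‖²) d(θ,θ')^{2α}`. Comparing with `x = 0` gives
`η‖R_θ(y)‖² ≤ ‖y‖²/2 + M_g`, which turns this into a Hölder bound with a constant affine in `‖y‖`.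
-/

open MeasureTheory Filter Set

theorem StrongConvexOn.mul_div_two_mul_norm_sub_sq_le_of_isMinOn
    {E : Type*} [NormedAddCommGroup E] [NormedSpace ℝ E] {s : Set E} {m : ℝ} {Q f h : E → ℝ}
    (hQ : StrongConvexOn s m Q) (hf : ConvexOn ℝ s f) (hh : ConvexOn ℝ s h) {u v : E}
    (hus : u ∈ s) (hvs : v ∈ s) (hu : IsMinOn (Q + f) s u) (hv : IsMinOn (Q + h) s v) :
    m / 2 * ‖u - v‖ ^ 2 ≤ (f v - h v) + (h u - f u) := by
  have hhalf : (2⁻¹ : ℝ) + 2⁻¹ = 1 := by norm_num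
  have hpos : (0 : ℝ) ≤ 2⁻¹ := by norm_num
  have hmid : (2⁻¹ : ℝ) • u + (2⁻¹ : ℝ) • v ∈ s := hQ.1 hus hvs hpos hpos hhalf
  have hQmid := hQ.2 hus hvs hpos hpos hhalf
  have hfmid := hf.2 hus hvs hpos hpos hhalf
  have hhmid := hh.2 hus hvs hpos hpos hhalf
  have hu_mid : Q u + f u ≤ Q _ + f _ := hu hmid
  have hv_mid : Q v + h v ≤ Q _ + h _ := hv hmid
  simp only [smul_eq_mul] at hQmid hfmid hhmid
  linarith

section ElasticNet

variable {X Y : Type*} [NormedAddCommGroup X] [InnerProductSpace ℝ X]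
  [NormedAddCommGroup Y] [NormedSpace ℝ Y] (A : X →L[ℝ] Y) (y : Y)

theorem strongConvexOn_elasticNet (η : ℝ) :
    StrongConvexOn univ (2 * η) fun x => 1 / 2 * ‖A x - y‖ ^ 2 + η * ‖x‖ ^ 2 := by
  refine strongConvexOn_iff_convex.2 ?_
  have hres : ConvexOn ℝ univ fun x => ‖A x - y‖ ^ 2 :=
    (convexOn_univ_norm.pow (fun z _ => norm_nonneg z) 2).comp_affineMap
      (A.toContinuousAffineMap.toAffineMap - AffineMap.const ℝ X y)
  refine (hres.smul (by norm_num : (0 : ℝ) ≤ 1 / 2)).congr fun x _ => ?_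
  simp only [smul_eq_mul]
  ring

theorem elasticNet_mul_norm_sub_sq_le {η : ℝ} {f h : X → ℝ}
    (hf : ConvexOn ℝ univ f) (hh : ConvexOn ℝ univ h) {u v : X}
    (hu : ∀ x, 1 / 2 * ‖A u - y‖ ^ 2 + f u + η * ‖u‖ ^ 2 ≤
      1 / 2 * ‖A x - y‖ ^ 2 + f x + η * ‖x‖ ^ 2)
    (hv : ∀ x, 1 / 2 * ‖A v - y‖ ^ 2 + h v + η * ‖v‖ ^ 2 ≤
      1 / 2 * ‖A x - y‖ ^ 2 + h x + η * ‖x‖ ^ 2) :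
    η * ‖u - v‖ ^ 2 ≤ (f v - h v) + (h u - f u) := by
  have key := (strongConvexOn_elasticNet A y η).mul_div_two_mul_norm_sub_sq_le_of_isMinOn hf hh
    (mem_univ u) (mem_univ v)
    (isMinOn_univ_iff.2 fun x => by simp only [Pi.add_apply]; linarith [hu x])
    (isMinOn_univ_iff.2 fun x => by simp only [Pi.add_apply]; linarith [hv x])
  rwa [mul_div_cancel_left₀ η two_ne_zero] at key

end ElasticNet

theorem elasticNet_mul_norm_sq_le {X Y : Type*} [NormedAddCommGroup X] [NormedSpace ℝ X]
    [NormedAddCommGroup Y] [NormedSpace ℝ Y] (A : X →L[ℝ] Y) (y : Y) {η : ℝ} {f : X → ℝ}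
    (hf : ∀ x, 0 ≤ f x) {u : X}
    (hu : ∀ x, 1 / 2 * ‖A u - y‖ ^ 2 + f u + η * ‖u‖ ^ 2 ≤
      1 / 2 * ‖A x - y‖ ^ 2 + f x + η * ‖x‖ ^ 2) :
    η * ‖u‖ ^ 2 ≤ ‖y‖ ^ 2 / 2 + f 0 := by
  have h0 := hu 0
  simp only [map_zero, zero_sub, norm_neg, norm_zero] at h0
  nlinarith [sq_nonneg ‖A u - y‖, hf u]

theorem norm_sub_le_of_sq_bounds {E : Type*} [SeminormedAddCommGroup E] {u v : E}
    {η C M s t : ℝ} (hη : 0 < η) (hC : 0 ≤ C) (hM : 0 ≤ M) (hs : 0 ≤ s) (ht : 0 ≤ t)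
    (huv : η * ‖u - v‖ ^ 2 ≤ C * (‖u‖ ^ 2 + ‖v‖ ^ 2) * t ^ 2)
    (hu : η * ‖u‖ ^ 2 ≤ s ^ 2 / 2 + M) (hv : η * ‖v‖ ^ 2 ≤ s ^ 2 / 2 + M) :
    ‖u - v‖ ≤ √C / η * (s + √(2 * M)) * t := by
  have hsum : ‖u‖ ^ 2 + ‖v‖ ^ 2 ≤ (s ^ 2 + 2 * M) / η := by
    rw [le_div_iff₀ hη]
    linarith
  have hsq : s ^ 2 + 2 * M ≤ (s + √(2 * M)) ^ 2 := by
    nlinarith [Real.sq_sqrt (by positivity : (0 : ℝ) ≤ 2 * M), Real.sqrt_nonneg (2 * M)]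
  have h : ‖u - v‖ ^ 2 ≤ (√C / η * (s + √(2 * M)) * t) ^ 2 :=
    calc ‖u - v‖ ^ 2 ≤ C * (‖u‖ ^ 2 + ‖v‖ ^ 2) * t ^ 2 / η := by
          rw [le_div_iff₀ hη]
          linarith
      _ ≤ C * ((s ^ 2 + 2 * M) / η) * t ^ 2 / η := by gcongr
      _ ≤ C * ((s + √(2 * M)) ^ 2 / η) * t ^ 2 / η := by gcongr
      _ = (√C / η * (s + √(2 * M)) * t) ^ 2 := by
          rw [mul_pow, mul_pow, div_pow, Real.sq_sqrt hC]
          ring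
  exact (sq_le_sq₀ (norm_nonneg _) (by positivity)).1 h

theorem elasticNet_holder_stability_general
    {X Y Θ : Type*}
    [NormedAddCommGroup X] [InnerProductSpace ℝ X]
    [NormedAddCommGroup Y] [InnerProductSpace ℝ Y]
    [MetricSpace Θ]
    (A : X →L[ℝ] Y) (η : ℝ) (hη : 0 < η)
    (g : Θ → X → ℝ) (Mg Cg : ℝ) (α : ℝ)
    (hconv : ∀ θ, ConvexOn ℝ Set.univ (g θ))
    (hnonneg : ∀ θ x, 0 ≤ g θ x)
    (hzero : ∀ θ, g θ 0 ≤ Mg)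
    (hstab : ∀ (x : X) (θ θ' : Θ),
      |g θ x - g θ' x| ≤ Cg * ‖x‖ ^ 2 * dist θ θ' ^ (2 * α))
    -- R θ y is the Elastic-Net minimizer
    (R : Θ → Y → X)
    (hmin : ∀ (θ : Θ) (y : Y) (x : X),
      (1 / 2) * ‖A (R θ y) - y‖ ^ 2 + g θ (R θ y) + η * ‖R θ y‖ ^ 2 ≤
        (1 / 2) * ‖A x - y‖ ^ 2 + g θ x + η * ‖x‖ ^ 2) :
    (∀ (y : Y) (θ θ' : Θ),
      ‖R θ y - R θ' y‖ ^ 2 ≤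
        (Cg / η) * (‖R θ y‖ ^ 2 + ‖R θ' y‖ ^ 2) * dist θ θ' ^ (2 * α)) ∧
      ∃ LR LR' : ℝ, 0 ≤ LR ∧ 0 ≤ LR' ∧
        ∀ (y : Y) (θ θ' : Θ),
          ‖R θ y - R θ' y‖ ≤ (LR * ‖y‖ + LR') * dist θ θ' ^ α := by
  have hkey : ∀ y θ θ', η * ‖R θ y - R θ' y‖ ^ 2 ≤
      Cg * (‖R θ y‖ ^ 2 + ‖R θ' y‖ ^ 2) * dist θ θ' ^ (2 * α) := fun y θ θ' => by
    have h := elasticNet_mul_norm_sub_sq_le A y (hconv θ) (hconv θ') (hmin θ y) (hmin θ' y)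
    have hv := (abs_le.1 (hstab (R θ' y) θ θ')).2
    have hu := (abs_le.1 (hstab (R θ y) θ θ')).1
    linarith
  refine ⟨fun y θ θ' => ?_, √(max Cg 0) / η, √(max Cg 0) / η * √(2 * max Mg 0),
    by positivity, by positivity, fun y θ θ' => ?_⟩
  · rw [div_mul_eq_mul_div, div_mul_eq_mul_div, le_div_iff₀ hη]
    linarith [hkey y θ θ']
  · have hbound : ∀ θ, η * ‖R θ y‖ ^ 2 ≤ ‖y‖ ^ 2 / 2 + max Mg 0 := fun θ =>
      (elasticNet_mul_norm_sq_le A y (hnonneg θ) (hmin θ y)).trans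
        (by linarith [hzero θ, le_max_left Mg 0])
    have hstep : η * ‖R θ y - R θ' y‖ ^ 2 ≤
        max Cg 0 * (‖R θ y‖ ^ 2 + ‖R θ' y‖ ^ 2) * (dist θ θ' ^ α) ^ 2 := by
      have hd : (dist θ θ' ^ α) ^ 2 = dist θ θ' ^ (2 * α) := by
        rw [mul_comm, Real.rpow_mul dist_nonneg, Real.rpow_two]
      rw [hd]
      exact (hkey y θ θ').trans (by gcongr; exact le_max_left _ _)
    calc ‖R θ y - R θ' y‖ ≤ √(max Cg 0) / η * (‖y‖ + √(2 * max Mg 0)) * dist θ θ' ^ α :=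
          norm_sub_le_of_sq_bounds hη (le_max_right _ _) (le_max_right _ _) (norm_nonneg y)
            (by positivity) hstep (hbound θ) (hbound θ')
      _ = _ := by ring

/-- Elastic-Net stability: under the hypotheses of well-posedness and the uniform Hölder
stability `|g_θ(x) − g_{θ'}(x)| ≤ C_g ‖x‖² d(θ,θ')^{2α}` of the penalties, the
Elastic-Net regularizer satisfies
`‖R_θ(y) − R_{θ'}(y)‖² ≤ (C_g/η)(‖R_θ(y)‖² + ‖R_{θ'}(y)‖²) d(θ,θ')^{2α}`; in particular
it is Hölder stable in `θ` with constant of the form `L_R ‖y‖ + L'_R` and exponent `α`. -/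
theorem elasticNet_holder_stability
    {X Y Θ : Type*}
    [NormedAddCommGroup X] [InnerProductSpace ℝ X] [CompleteSpace X]
    [NormedAddCommGroup Y] [InnerProductSpace ℝ Y] [CompleteSpace Y]
    [MetricSpace Θ]
    (A : X →L[ℝ] Y) (η : ℝ) (hη : 0 < η)
    (g : Θ → X → ℝ) (Mg Cg : ℝ) (α : ℝ) (hα : α ∈ Set.Ioc (0 : ℝ) 1)
    (hconv : ∀ θ, ConvexOn ℝ Set.univ (g θ))
    (hcoer : ∀ θ, Tendsto (g θ) (Filter.comap (fun x : X => ‖x‖) atTop) atTop)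
    (hlsc : ∀ θ, LowerSemicontinuous (g θ))
    (hnonneg : ∀ θ x, 0 ≤ g θ x)
    (hzero : ∀ θ, g θ 0 ≤ Mg)
    (hstab : ∀ (x : X) (θ θ' : Θ),
      |g θ x - g θ' x| ≤ Cg * ‖x‖ ^ 2 * dist θ θ' ^ (2 * α))
    -- R θ y is the Elastic-Net minimizer
    (R : Θ → Y → X)
    (hmin : ∀ (θ : Θ) (y : Y) (x : X),
      (1 / 2) * ‖A (R θ y) - y‖ ^ 2 + g θ (R θ y) + η * ‖R θ y‖ ^ 2 ≤
        (1 / 2) * ‖A x - y‖ ^ 2 + g θ x + η * ‖x‖ ^ 2) :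
    (∀ (y : Y) (θ θ' : Θ),
      ‖R θ y - R θ' y‖ ^ 2 ≤
        (Cg / η) * (‖R θ y‖ ^ 2 + ‖R θ' y‖ ^ 2) * dist θ θ' ^ (2 * α)) ∧
      ∃ LR LR' : ℝ, 0 ≤ LR ∧ 0 ≤ LR' ∧
        ∀ (y : Y) (θ θ' : Θ),
          ‖R θ y - R θ' y‖ ≤ (LR * ‖y‖ + LR') * dist θ θ' ^ α :=
  elasticNet_holder_stability_general A η hη g Mg Cg α hconv hnonneg hzero hstab R hmin
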